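/- arXiv:math/0412156 — 2 statements merged into one kernel-verified Lean document; each statement's English description precedes it below -/
import Mathlib

section
/- Every element of order 4 in Q = ℤ² ⋊ ℤ/4 generates a subgroup conjugate to ⟨e₁t⟩ or ⟨t⟩; equivalently, up to conjugacy there are exactly two subgroups of order four in Q, namely ⟨e₁t⟩ and ⟨t⟩. -/
open SemidirectProduct

/-- The automorphism of `ℤ²` given by multiplication by `i`: `(a,b) ↦ (-b,a)`. -/
def J : (ℤ × ℤ) ≃+ (ℤ × ℤ) where
  toFun p := (-p.2, p.1)
  invFun p := (p.2, -p.1)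
  left_inv p := by simp
  right_inv p := by simp
  map_add' p q := by simp [Prod.ext_iff]; ring

abbrev Z2 := Multiplicative (ℤ × ℤ)

def Jm : MulAut Z2 := AddEquiv.toMultiplicative J

lemma Jm_pow_four : Jm ^ 4 = 1 := by
  refine MulEquiv.ext fun x => ?_
  show Jm (Jm (Jm (Jm x))) = x
  simp [Jm, J, AddEquiv.toMultiplicative, Prod.ext_iff]

lemma Jm_pow_mod (n : ℕ) : Jm ^ (n % 4) = Jm ^ n := by
  conv_rhs => rw [← Nat.div_add_mod n 4]
  rw [pow_add, pow_mul, Jm_pow_four, one_pow, one_mul]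

/-- The action of `ℤ/4` on `ℤ²` by powers of multiplication by `i`. -/
def phiQ : Multiplicative (ZMod 4) →* MulAut Z2 where
  toFun s := Jm ^ (Multiplicative.toAdd s).val
  map_one' := by
    show Jm ^ (0 : ZMod 4).val = 1
    simp
  map_mul' a b := by
    show Jm ^ ((Multiplicative.toAdd a + Multiplicative.toAdd b : ZMod 4)).val = _
    rw [ZMod.val_add, Jm_pow_mod, pow_add]

/-- `Q = ℤ² ⋊ ℤ/4`. -/
abbrev Q := Z2 ⋊[phiQ] Multiplicative (ZMod 4)

/-- The generator `t` of the `ℤ/4`-factor of `Q`. -/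
def tQ : Q := inr (Multiplicative.ofAdd (1 : ZMod 4))

/-- The inclusion `ℤ² → Q`. -/
def ιQ (x : ℤ × ℤ) : Q := inl (Multiplicative.ofAdd x)

open Pointwise

/-!
An element of order four cannot lie in `ℤ² ⋊ ⟨t²⟩`: translations are torsion-free and
`(x t²)² = 1`. Up to inversion it is therefore `x t`, and conjugating by `y ∈ ℤ²` turns it into
`(x + (1 - i) y) t`. The image of `1 - i` is the index-two sublattice `{(a, b) | a + b even}`,
so `x t` is conjugate to `t` or to `e₁ t`. The parity of `a + b` on the translation part is
invariant under `i`, hence a homomorphism `Q → ℤ/2`; it kills `⟨t⟩` but not `e₁ t`, so the two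
subgroups are not conjugate.
-/

open Multiplicative Subgroup

theorem MulAut.conj_smul_zpowers {G : Type*} [Group G] (q g : G) :
    MulAut.conj q • zpowers g = zpowers (q * g * q⁻¹) := by
  rw [pointwise_smul_def]
  exact MonoidHom.map_zpowers _ _

lemma ιQ_zero : ιQ 0 = 1 := map_one inl

lemma ιQ_add (x y : ℤ × ℤ) : ιQ (x + y) = ιQ x * ιQ y := map_mul inl _ _

lemma ιQ_neg (x : ℤ × ℤ) : ιQ (-x) = (ιQ x)⁻¹ := map_inv inl _

lemma tQ_mul_ιQ (x : ℤ × ℤ) : tQ * ιQ x = ιQ (J x) * tQ := by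
  have : ιQ (J x) = inl (phiQ (ofAdd 1) (ofAdd x)) := rfl
  rw [this, inl_aut, map_inv, tQ, ιQ, inv_mul_cancel_right]

lemma ιQ_conj_ιQ_mul_tQ (x y : ℤ × ℤ) :
    ιQ y * (ιQ x * tQ) * (ιQ y)⁻¹ = ιQ (x + (y - J y)) * tQ := by
  rw [← ιQ_neg, mul_assoc, mul_assoc, tQ_mul_ιQ, ← mul_assoc, ← mul_assoc, ← ιQ_add, ← ιQ_add,
    map_neg]
  congr 2
  abel

lemma eq_ιQ_mul_tQ_of_right_eq {g : Q} (hg : g.right = ofAdd 1) :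
    g = ιQ (toAdd g.left) * tQ := by
  conv_lhs => rw [← inl_left_mul_inr_right g, hg]
  rfl

lemma exists_sub_J_eq (x : ℤ × ℤ) : ∃ y, y - J y = x ∨ (1, 0) + (y - J y) = x := by
  obtain ⟨c, hc⟩ | ⟨c, hc⟩ := Int.even_or_odd (x.1 + x.2)
  · exact ⟨(x.1 - c, c), Or.inl (Prod.ext (by simp [J]) (by simp [J]; omega))⟩
  · exact ⟨(x.1 - 1 - c, c), Or.inr (Prod.ext (by simp [J]) (by simp [J]; omega))⟩

lemma exists_conj_of_right_eq_one {g : Q} (hg : g.right = ofAdd 1) :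
    ∃ q : Q, q * (ιQ (1, 0) * tQ) * q⁻¹ = g ∨ q * tQ * q⁻¹ = g := by
  obtain ⟨y, hy | hy⟩ := exists_sub_J_eq (toAdd g.left)
  · refine ⟨ιQ y, Or.inr ?_⟩
    rw [eq_ιQ_mul_tQ_of_right_eq hg, ← hy]
    simpa only [ιQ_zero, one_mul, zero_add] using ιQ_conj_ιQ_mul_tQ 0 y
  · refine ⟨ιQ y, Or.inl ?_⟩
    rw [eq_ιQ_mul_tQ_of_right_eq hg, ← hy, ιQ_conj_ιQ_mul_tQ]

lemma orderOf_ne_four_of_right_eq_one {g : Q} (hg : g.right = 1) : orderOf g ≠ 4 := by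
  have hg' : g = inl g.left := by
    conv_lhs => rw [← inl_left_mul_inr_right g, hg, map_one, mul_one]
  rw [hg', orderOf_injective inl inl_injective]
  intro h4
  have : g.left = 1 := (isOfFinOrder_iff_eq_one _).1 (orderOf_pos_iff.1 (by omega))
  simp [this] at h4

lemma sq_eq_one_of_right_eq_ofAdd_two {g : Q} (hg : g.right = ofAdd 2) : g ^ 2 = 1 := by
  have hJ2 (x : Z2) : phiQ (ofAdd 2) x = x⁻¹ := rfl
  ext : 1
  · rw [pow_two, mul_left, hg, hJ2, mul_inv_cancel, one_left]
  · rw [pow_two, mul_right, hg]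
    decide

lemma right_eq_one_or_inv_right_eq_one {g : Q} (hg : orderOf g = 4) :
    g.right = ofAdd 1 ∨ g⁻¹.right = ofAdd 1 := by
  have h4 : ∀ s : Multiplicative (ZMod 4),
      s = 1 ∨ s = ofAdd 1 ∨ s = ofAdd 2 ∨ s = ofAdd 3 := by decide
  rcases h4 g.right with h | h | h | h
  · exact absurd hg (orderOf_ne_four_of_right_eq_one h)
  · exact Or.inl h
  · have := orderOf_dvd_of_pow_eq_one (sq_eq_one_of_right_eq_ofAdd_two h)
    rw [hg] at this
    norm_num at this
  · right
    rw [inv_right, h]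
    decide

def parity : Z2 →* Multiplicative (ZMod 2) :=
  AddMonoidHom.toMultiplicative
    ((Int.castAddHom (ZMod 2)).comp (AddMonoidHom.fst ℤ ℤ + AddMonoidHom.snd ℤ ℤ))

lemma parity_Jm (x : Z2) : parity (Jm x) = parity x := by
  change ofAdd (((-(toAdd x).2 + (toAdd x).1 : ℤ) : ZMod 2)) =
    ofAdd (((toAdd x).1 + (toAdd x).2 : ℤ) : ZMod 2)
  rw [EmbeddingLike.apply_eq_iff_eq, ZMod.intCast_eq_intCast_iff_dvd_sub]
  exact ⟨(toAdd x).2, by ring⟩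

lemma parity_Jm_pow (n : ℕ) (x : Z2) : parity ((Jm ^ n) x) = parity x := by
  induction n with
  | zero => rfl
  | succ n ih => rw [pow_succ', MulAut.mul_apply, parity_Jm, ih]

def parityQ : Q →* Multiplicative (ZMod 2) :=
  lift parity 1 fun s => by
    ext x
    simp [phiQ, parity_Jm_pow]

lemma parityQ_ιQ_e₁_mul_tQ : parityQ (ιQ (1, 0) * tQ) = ofAdd 1 := by
  simp [parityQ, ιQ, tQ, parity]

lemma conj_ιQ_e₁_mul_tQ_notMem_zpowers_tQ (q : Q) :
    q * (ιQ (1, 0) * tQ) * q⁻¹ ∉ zpowers tQ := by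
  intro h
  have hker : zpowers tQ ≤ parityQ.ker := zpowers_le.2 (by simp [parityQ, tQ])
  have := hker h
  rw [MonoidHom.mem_ker, map_mul, map_mul, map_inv, mul_inv_cancel_comm,
    parityQ_ιQ_e₁_mul_tQ] at this
  exact absurd this (by decide)

/-- Every element of order `4` in `Q = ℤ² ⋊ ℤ/4` generates a subgroup conjugate to
`⟨e₁t⟩` or `⟨t⟩`; moreover these two subgroups are not conjugate, so up to conjugacy
there are exactly two subgroups of order four. -/
theorem stmt_5 :
    (∀ g : Q, orderOf g = 4 →
      ∃ q : Q,
        Subgroup.zpowers g = MulAut.conj q • Subgroup.zpowers (ιQ (1, 0) * tQ) ∨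
        Subgroup.zpowers g = MulAut.conj q • Subgroup.zpowers tQ) ∧
    (∀ q : Q, MulAut.conj q • Subgroup.zpowers (ιQ (1, 0) * tQ) ≠ Subgroup.zpowers tQ) := by
  simp only [MulAut.conj_smul_zpowers]
  refine ⟨fun g hg => ?_, fun q hq => ?_⟩
  · suffices key : ∀ h : Q, h.right = ofAdd 1 → ∃ q : Q,
        zpowers h = zpowers (q * (ιQ (1, 0) * tQ) * q⁻¹) ∨ zpowers h = zpowers (q * tQ * q⁻¹) by
      rcases right_eq_one_or_inv_right_eq_one hg with h | h
      · exact key g h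
      · simpa only [zpowers_inv] using key g⁻¹ h
    intro h hh
    obtain ⟨q, rfl | rfl⟩ := exists_conj_of_right_eq_one hh
    exacts [⟨q, Or.inl rfl⟩, ⟨q, Or.inr rfl⟩]
  · exact conj_ιQ_e₁_mul_tQ_notMem_zpowers_tQ q (hq ▸ mem_zpowers _)
end

section
/- Let V be an infinite virtually cyclic subgroup of G = Hei ⋊ ℤ/4 whose image p(V) in Q = ℤ² ⋊ ℤ/4 is finite, where p: G → Q has central kernel ⟨z⟩ ≅ ℤ. Then V contains a central infinite cyclic subgroup and hence admits a surjection onto ℤ. (The key point: V ∩ ⟨z⟩ is infinite cyclic and p(V) is a finite group of odd order in the relevant decomposition, giving a central infinite cyclic subgroup of V.) -/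
open SemidirectProduct

/-- The discrete 3-dimensional Heisenberg group: integer triples `(x,y,z)` corresponding to
the upper triangular matrix with `x` in position (1,2), `y` in position (1,3) and `z` in
position (2,3). -/
@[ext] structure Hei where
  x : ℤ
  y : ℤ
  z : ℤ

namespace Hei

instance : Mul Hei := ⟨fun a b => ⟨a.x + b.x, a.y + b.y + a.x * b.z, a.z + b.z⟩⟩
instance : One Hei := ⟨⟨0, 0, 0⟩⟩
instance : Inv Hei := ⟨fun a => ⟨-a.x, -a.y + a.x * a.z, -a.z⟩⟩

@[simp] lemma mul_x (a b : Hei) : (a * b).x = a.x + b.x := rfl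
@[simp] lemma mul_y (a b : Hei) : (a * b).y = a.y + b.y + a.x * b.z := rfl
@[simp] lemma mul_z (a b : Hei) : (a * b).z = a.z + b.z := rfl
@[simp] lemma one_x : (1 : Hei).x = 0 := rfl
@[simp] lemma one_y : (1 : Hei).y = 0 := rfl
@[simp] lemma one_z : (1 : Hei).z = 0 := rfl
@[simp] lemma inv_x (a : Hei) : a⁻¹.x = -a.x := rfl
@[simp] lemma inv_y (a : Hei) : a⁻¹.y = -a.y + a.x * a.z := rfl
@[simp] lemma inv_z (a : Hei) : a⁻¹.z = -a.z := rfl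

instance : Group Hei where
  mul_assoc a b c := by ext <;> simp <;> ring
  one_mul a := by ext <;> simp
  mul_one a := by ext <;> simp
  inv_mul_cancel a := by ext <;> simp

/-- The generator `u` of `Hei`. -/
def u : Hei := ⟨1, 0, 0⟩
/-- The generator `v` of `Hei`. -/
def v : Hei := ⟨0, 0, 1⟩
/-- The central generator `z` of `Hei`. -/
def zz : Hei := ⟨0, 1, 0⟩

end Hei

open SemidirectProduct

set_option linter.unreachableTactic false in
set_option linter.unusedTactic false in
/-- The order-four automorphism of `Hei` sending `u ↦ v`, `v ↦ u⁻¹`, `z ↦ z`; in coordinates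
`(x,y,z) ↦ (-z, y - xz, x)`. -/
def τ : MulAut Hei where
  toFun p := ⟨-p.z, p.y - p.x * p.z, p.x⟩
  invFun p := ⟨p.z, p.y - p.z * p.x, -p.x⟩
  left_inv p := by ext <;> simp <;> ring
  right_inv p := by ext <;> simp <;> ring
  map_mul' a b := by ext <;> simp <;> ring

set_option linter.unreachableTactic false in
set_option linter.unusedTactic false in
lemma τ_pow_four : τ ^ 4 = 1 := by
  refine MulEquiv.ext fun p => ?_
  show τ (τ (τ (τ p))) = p
  ext <;> simp [τ] <;> ring

lemma τ_pow_mod (n : ℕ) : τ ^ (n % 4) = τ ^ n := by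
  conv_rhs => rw [← Nat.div_add_mod n 4]
  rw [pow_add, pow_mul, τ_pow_four, one_pow, one_mul]

/-- The action of `ℤ/4` on `Hei` by powers of `τ`. -/
def φG : Multiplicative (ZMod 4) →* MulAut Hei where
  toFun s := τ ^ (Multiplicative.toAdd s).val
  map_one' := by
    show τ ^ (0 : ZMod 4).val = 1
    simp
  map_mul' a b := by
    show τ ^ ((Multiplicative.toAdd a + Multiplicative.toAdd b : ZMod 4)).val = _
    rw [ZMod.val_add, τ_pow_mod, pow_add]

/-- `G = Hei ⋊ ℤ/4`. -/
abbrev G := Hei ⋊[φG] Multiplicative (ZMod 4)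

/-- The generator `t` of the `ℤ/4`-factor of `G`. -/
def tG : G := inr (Multiplicative.ofAdd (1 : ZMod 4))
/-- The element `u` of `G`. -/
def uG : G := inl Hei.u
/-- The element `v` of `G`. -/
def vG : G := inl Hei.v
/-- The central element `z` of `G`. -/
def zG : G := inl Hei.zz

/-- The projection `Hei →* ℤ²` killing the center. -/
def pH : Hei →* Z2 where
  toFun a := Multiplicative.ofAdd (a.x, a.z)
  map_one' := rfl
  map_mul' a b := rfl

lemma pH_comm (n : ℕ) : ∀ a : Hei, pH ((τ ^ n) a) = (Jm ^ n) (pH a) := by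
  induction n with
  | zero => intro a; rfl
  | succ n ih =>
      intro a
      rw [pow_succ, pow_succ]
      simp only [MulAut.mul_apply]
      rw [ih (τ a)]
      rfl

/-- The canonical projection `p : G → Q` with kernel the central subgroup `⟨z⟩ ≅ ℤ`,
sending `z ↦ 1`, `u ↦ e₁`, `v ↦ e₂` and `t ↦ t`. -/
def p : G →* Q :=
  SemidirectProduct.map pH (MonoidHom.id _) (by
    intro g
    refine MonoidHom.ext fun a => ?_
    show pH ((τ ^ (Multiplicative.toAdd g).val) a) =
      (Jm ^ (Multiplicative.toAdd g).val) (pH a)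
    exact pH_comm _ a)

/-!
Since `p(V)` is finite, `K = V ∩ ⟨z⟩` has finite index in `V`; it is central and cyclic because
`⟨z⟩` is, and infinite because `V` is. On the central subgroup `K` the transfer `V → K ≅ ℤ` is
`k ↦ k ^ [V : K]`, so it is nonzero, and its image, a nonzero subgroup of `ℤ`, is infinite cyclic.
-/

open Subgroup

section Transfer

variable {G : Type*} [Group G]

theorem MonoidHom.transfer_ne_one_of_le_center {A : Type*} [CommGroup A] [IsMulTorsionFree A]
    {H : Subgroup G} [H.FiniteIndex] (hH : H ≤ center G) {ϕ : H →* A} (hϕ : ϕ ≠ 1) :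
    ϕ.transfer ≠ 1 := by
  obtain ⟨h, hh⟩ : ∃ h, ϕ h ≠ 1 := by
    by_contra! h
    exact hϕ (MonoidHom.ext h)
  have key : ∀ (k : ℕ) (g₀ : G), g₀⁻¹ * (h : G) ^ k * g₀ ∈ H →
      g₀⁻¹ * (h : G) ^ k * g₀ = (h : G) ^ k := fun k g₀ _ => by
    rw [mul_assoc, ← mem_center_iff.mp ((center G).pow_mem (hH h.2) k) g₀, inv_mul_cancel_left]
  intro ht
  have hpow : ϕ h ^ H.index = 1 := by
    have := DFunLike.congr_fun ht (h : G)
    rw [transfer_eq_pow ϕ h key, MonoidHom.one_apply] at this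
    rwa [← map_pow]
  exact hh ((pow_eq_one_iff_left FiniteIndex.index_ne_zero).mp hpow)

theorem exists_surjective_int_of_ne_one (f : G →* Multiplicative ℤ) (hf : f ≠ 1) :
    ∃ g : G →* Multiplicative ℤ, Function.Surjective g := by
  obtain ⟨x, hx⟩ : ∃ x, f x ≠ 1 := by
    by_contra! h
    exact hf (MonoidHom.ext h)
  have : Infinite f.range :=
    ((infinite_zpowers.mpr (not_isOfFinOrder_of_isMulTorsionFree hx)).mono
      (zpowers_le.mpr (MonoidHom.mem_range.mpr ⟨x, rfl⟩))).to_subtype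
  exact ⟨intCyclicMulEquiv.symm.toMonoidHom.comp f.rangeRestrict,
    intCyclicMulEquiv.symm.surjective.comp f.rangeRestrict_surjective⟩

theorem exists_surjective_int_of_le_center (K : Subgroup G) [K.FiniteIndex] (hK : K ≤ center G)
    [IsCyclic K] [Infinite K] : ∃ f : G →* Multiplicative ℤ, Function.Surjective f := by
  refine exists_surjective_int_of_ne_one _
    (MonoidHom.transfer_ne_one_of_le_center hK (ϕ := intCyclicMulEquiv.symm.toMonoidHom) ?_)
  intro h
  obtain ⟨k, hk⟩ := exists_ne (1 : K)
  exact hk (intCyclicMulEquiv.symm.injective (by simpa using DFunLike.congr_fun h k))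

end Transfer

section Restriction

variable {G Q : Type*} [Group G] [Group Q] {V H : Subgroup G}

theorem Subgroup.infinite_of_finiteIndex [Infinite G] (K : Subgroup G) [K.FiniteIndex] :
    Infinite K := by
  rw [← not_finite_iff_infinite]
  intro hK
  exact not_finite_iff_infinite.mpr ‹_› ((finite_iff_finite_and_finiteIndex K).mpr ⟨hK, ‹_›⟩)

theorem Subgroup.finiteIndex_subgroupOf_ker {p : G →* Q} [Finite (V.map p)] :
    (p.ker.subgroupOf V).FiniteIndex := by
  have : Finite (p.comp V.subtype).range := by
    rwa [MonoidHom.range_comp, range_subtype]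
  rw [subgroupOf, MonoidHom.comap_ker]
  infer_instance

theorem Subgroup.subgroupOf_le_center (hH : H ≤ center G) : H.subgroupOf V ≤ center V :=
  fun _ hx => mem_center_iff.mpr fun y => Subtype.ext (mem_center_iff.mp (hH hx) y)

instance Subgroup.isCyclic_subgroupOf [IsCyclic H] : IsCyclic (H.subgroupOf V) :=
  isCyclic_of_injective ((V.subtype.comp (H.subgroupOf V).subtype).codRestrict H fun x => x.2)
    fun _ _ h => by
      have h' := congrArg Subtype.val h
      exact Subtype.ext (Subtype.ext h')

end Restriction

lemma Hei.commute_zz (a : Hei) : Commute a Hei.zz := by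
  ext <;> simp [Hei.zz]; ring

lemma Hei.zz_zpow (n : ℤ) : Hei.zz ^ n = ⟨0, n, 0⟩ := by
  induction n using Int.induction_on with
  | zero => rfl
  | succ n ih => rw [zpow_add_one, ih]; ext <;> simp [Hei.zz]
  | pred n ih => rw [zpow_sub_one, ih]; ext <;> simp [Hei.zz, sub_eq_add_neg]

lemma τ_pow_zz (n : ℕ) : (τ ^ n) Hei.zz = Hei.zz := by
  induction n with
  | zero => rfl
  | succ n ih =>
    rw [pow_succ', MulAut.mul_apply, ih]
    ext <;> simp [τ, Hei.zz]

lemma zG_mem_center : zG ∈ center G := by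
  refine mem_center_iff.mpr fun g => SemidirectProduct.ext ?_ (mul_comm _ _)
  show g.left * φG g.right Hei.zz = Hei.zz * φG 1 g.left
  rw [map_one, MulAut.one_apply, ← (Hei.commute_zz g.left).eq]
  exact congrArg _ (τ_pow_zz _)

lemma p_eq_one_iff {g : G} : p g = 1 ↔ g.left.x = 0 ∧ g.left.z = 0 ∧ g.right = 1 := by
  simp [SemidirectProduct.ext_iff, p, pH, Prod.ext_iff, and_assoc]

lemma ker_p_eq : p.ker = zpowers zG := by
  ext g
  rw [MonoidHom.mem_ker, p_eq_one_iff, mem_zpowers_iff]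
  have hzpow (n : ℤ) : zG ^ n = SemidirectProduct.inl ⟨0, n, 0⟩ := by
    rw [zG, ← map_zpow, Hei.zz_zpow]
  constructor
  · rintro ⟨hx, hz, hr⟩
    refine ⟨g.left.y, ?_⟩
    rw [hzpow]
    ext <;> simp [hx, hz, hr]
  · rintro ⟨n, rfl⟩
    rw [hzpow]
    exact ⟨rfl, rfl, rfl⟩

/-- Let `V` be an infinite virtually cyclic subgroup of `G = Hei ⋊ ℤ/4` whose image `p(V)`
in `Q = ℤ² ⋊ ℤ/4` is finite.  Then the intersection of `V` with the central kernel `⟨z⟩`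
is nontrivial, `V` contains a central infinite cyclic subgroup, and `V` admits a surjective
homomorphism onto `ℤ`. -/
theorem stmt_16 :
    ∀ V : Subgroup G, Infinite V →
      (∃ H : Subgroup V, IsCyclic H ∧ H.index ≠ 0) →
      Finite (V.map p) →
      (V ⊓ Subgroup.zpowers zG ≠ ⊥) ∧
      (∃ C : Subgroup V, C ≤ Subgroup.center V ∧ IsCyclic C ∧ Infinite C) ∧
      (∃ f : V →* Multiplicative ℤ, Function.Surjective f) := by
  intro V _ _ _
  set K := (zpowers zG).subgroupOf V
  have : K.FiniteIndex := by
    have := finiteIndex_subgroupOf_ker (p := p) (V := V)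
    rwa [ker_p_eq] at this
  have : Infinite K := K.infinite_of_finiteIndex
  have hK : K ≤ center V := subgroupOf_le_center (zpowers_le.mpr zG_mem_center)
  refine ⟨?_, ⟨K, hK, inferInstance, inferInstance⟩, exists_surjective_int_of_le_center K hK⟩
  rw [inf_comm, Ne, ← disjoint_iff, ← subgroupOf_eq_bot]
  exact (nontrivial_iff_ne_bot K).mp inferInstance
end
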